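/- Let r ≥ 2 be an even integer, k ≥ r an integer and p ≥ r a real number. Let G be the complete regular k-partite r-graph with k parts each of size t ≥ 1. Then λ^(p)(G) = t^{r−r/p} · λ^(p)(K_k^r). -/

import Mathlib

/-! Write `z i = ∑ j, y (i, j)` for the sum of a vector `y` on `[k] × [t]` over the part `i`.
Every edge of the multipartite graph is a transversal of a unique edge of `K_k^r`, so expanding
products gives `P_G(y) = P_K(z)`. Hölder's inequality bounds `‖z‖_p ≤ t^(1 - 1/p) ‖y‖_p`, and as
`P_K` is homogeneous of degree `r` with `λ(K) ≥ 0` this yields `λ(G) ≤ t^(r - r/p) λ(K)`.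
Conversely, spreading a unit vector `x` evenly, `y (i, j) = t^(-1/p) x i`, gives a unit vector
with `z = t^(1 - 1/p) x`, hence `P_G(y) = t^(r - r/p) P_K(x)`. -/

open Finset

/-- Polynomial form of a weighted `r`-graph with edge set `E` and weights `w`:
`P(x) = r! * ∑_{e ∈ E} w(e) * ∏_{i ∈ e} x i`. -/
noncomputable def polyForm (r : ℕ) {V : Type*} (E : Finset (Finset V))
    (w : Finset V → ℝ) (x : V → ℝ) : ℝ :=
  (r.factorial : ℝ) * ∑ e ∈ E, w e * ∏ i ∈ e, x i

/-- The ℓ^p norm of a vector. -/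
noncomputable def lpNorm (p : ℝ) {V : Type*} [Fintype V] (x : V → ℝ) : ℝ :=
  (∑ i, |x i| ^ p) ^ (1 / p)

/-- `λ^(p)(G_w)`: the maximum of the polynomial form over the unit ℓ^p sphere. -/
noncomputable def lamMax (r : ℕ) (p : ℝ) {V : Type*} [Fintype V]
    (E : Finset (Finset V)) (w : Finset V → ℝ) : ℝ :=
  sSup {t | ∃ x : V → ℝ, lpNorm p x = 1 ∧ polyForm r E w x = t}

/-- `λ_min^(p)(G_w)`: the minimum of the polynomial form over the unit ℓ^p sphere. -/
noncomputable def lamMin (r : ℕ) (p : ℝ) {V : Type*} [Fintype V]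
    (E : Finset (Finset V)) (w : Finset V → ℝ) : ℝ :=
  sInf {t | ∃ x : V → ℝ, lpNorm p x = 1 ∧ polyForm r E w x = t}

/-- Edge set of the complete `r`-graph `K_k^r` on vertex set `Fin k`. -/
def completeEdges (r k : ℕ) : Finset (Finset (Fin k)) :=
  Finset.univ.powersetCard r

/-- Edge set of the complete regular `k`-partite `r`-graph with parts of size `t`:
vertices are `Fin k × Fin t` (the parts are the fibers of `Prod.fst`), and edges are
all `r`-element vertex sets containing at most one vertex from each part. -/
def multiEdges (r k t : ℕ) : Finset (Finset (Fin k × Fin t)) :=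
  (Finset.univ.powersetCard r).filter (fun e => (e.image Prod.fst).card = r)

section LpNorm

variable {V : Type*} [Fintype V] {p : ℝ}

lemma lpNorm_nonneg (x : V → ℝ) : 0 ≤ lpNorm p x :=
  Real.rpow_nonneg (sum_nonneg fun _ _ => Real.rpow_nonneg (abs_nonneg _) _) _

lemma lpNorm_rpow (hp : p ≠ 0) (x : V → ℝ) : lpNorm p x ^ p = ∑ i, |x i| ^ p := by
  rw [lpNorm, ← Real.rpow_mul (sum_nonneg fun _ _ => Real.rpow_nonneg (abs_nonneg _) _),
    one_div_mul_cancel hp, Real.rpow_one]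

lemma lpNorm_smul (hp : p ≠ 0) (c : ℝ) (x : V → ℝ) : lpNorm p (c • x) = |c| * lpNorm p x := by
  have hc : 0 ≤ |c| := abs_nonneg c
  simp only [lpNorm, Pi.smul_apply, smul_eq_mul, abs_mul, Real.mul_rpow hc (abs_nonneg _),
    ← mul_sum]
  rw [Real.mul_rpow (Real.rpow_nonneg hc p)
      (sum_nonneg fun _ _ => Real.rpow_nonneg (abs_nonneg _) _),
    ← Real.rpow_mul hc, mul_one_div_cancel hp, Real.rpow_one]

lemma lpNorm_pos {x : V → ℝ} (hx : x ≠ 0) : 0 < lpNorm p x := by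
  obtain ⟨i, hi⟩ := Function.ne_iff.mp hx
  refine Real.rpow_pos_of_pos (lt_of_lt_of_le ?_ (single_le_sum
    (fun j _ => Real.rpow_nonneg (abs_nonneg (x j)) p) (mem_univ i))) _
  exact Real.rpow_pos_of_pos (abs_pos.mpr hi) p

lemma abs_le_one_of_lpNorm_eq_one (hp : 0 < p) {x : V → ℝ} (hx : lpNorm p x = 1) (i : V) :
    |x i| ≤ 1 := by
  have hsum : |x i| ^ p ≤ 1 := by
    rw [← Real.one_rpow p, ← hx, lpNorm_rpow hp.ne']
    exact single_le_sum (fun j _ => Real.rpow_nonneg (abs_nonneg (x j)) p) (mem_univ i)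
  by_contra! h
  exact (Real.one_lt_rpow h hp).not_ge hsum

lemma lpNorm_single [DecidableEq V] (hp : p ≠ 0) (v : V) :
    lpNorm p (Pi.single v 1 : V → ℝ) = 1 := by
  have h : ∀ i, |(Pi.single v 1 : V → ℝ) i| ^ p = (Pi.single v 1 : V → ℝ) i := fun i => by
    rcases eq_or_ne i v with rfl | hi
    · simp
    · simp [hi, Real.zero_rpow hp]
  simp only [lpNorm, h, sum_pi_single', mem_univ, if_true, Real.one_rpow]

variable {α β : Type*} [Fintype α] [Fintype β]

lemma lpNorm_comp_fst (x : α → ℝ) :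
    lpNorm p (fun v : α × β => x v.1) = (Fintype.card β : ℝ) ^ (1 / p) * lpNorm p x := by
  rw [lpNorm, lpNorm, Fintype.sum_prod_type]
  simp only [sum_const, card_univ, nsmul_eq_mul, ← mul_sum]
  exact Real.mul_rpow (Nat.cast_nonneg _)
    (sum_nonneg fun _ _ => Real.rpow_nonneg (abs_nonneg _) _)

lemma lpNorm_sum_fiber_le (hp : 1 ≤ p) (y : α × β → ℝ) :
    lpNorm p (fun i => ∑ j, y (i, j)) ≤ (Fintype.card β : ℝ) ^ (1 - 1 / p) * lpNorm p y := by
  have hp0 : 0 < p := by linarith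
  have hβ : (0 : ℝ) ≤ Fintype.card β := Nat.cast_nonneg _
  rw [← Real.rpow_le_rpow_iff (lpNorm_nonneg _)
      (mul_nonneg (Real.rpow_nonneg hβ _) (lpNorm_nonneg _)) hp0,
    Real.mul_rpow (Real.rpow_nonneg hβ _) (lpNorm_nonneg _), lpNorm_rpow hp0.ne',
    lpNorm_rpow hp0.ne', ← Real.rpow_mul hβ, Fintype.sum_prod_type, mul_sum,
    show (1 - 1 / p) * p = p - 1 by field_simp]
  gcongr with i
  calc |∑ j, y (i, j)| ^ p ≤ (∑ j, |y (i, j)|) ^ p := by gcongr; exact abs_sum_le_sum_abs _ _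
    _ ≤ _ := Real.rpow_sum_le_const_mul_sum_rpow _ _ hp

end LpNorm

section LamMax

variable {V : Type*} {r : ℕ} {E : Finset (Finset V)} {w : Finset V → ℝ}

lemma polyForm_smul (hE : ∀ e ∈ E, e.card = r) (c : ℝ) (x : V → ℝ) :
    polyForm r E w (c • x) = c ^ r * polyForm r E w x := by
  have h : ∀ e ∈ E, w e * ∏ i ∈ e, (c • x) i = c ^ r * (w e * ∏ i ∈ e, x i) := fun e he => by
    simp only [Pi.smul_apply, smul_eq_mul, prod_mul_distrib, prod_const, hE e he]
    ring
  rw [polyForm, polyForm, sum_congr rfl h, ← mul_sum, mul_left_comm]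

variable [Fintype V] {p : ℝ}

lemma polyForm_le_of_lpNorm_eq_one (hp : 0 < p) {x : V → ℝ} (hx : lpNorm p x = 1) :
    polyForm r E w x ≤ r.factorial * ∑ e ∈ E, |w e| := by
  refine mul_le_mul_of_nonneg_left (sum_le_sum fun e _ => ?_) (Nat.cast_nonneg _)
  calc w e * ∏ i ∈ e, x i ≤ |w e * ∏ i ∈ e, x i| := le_abs_self _
    _ = |w e| * ∏ i ∈ e, |x i| := by rw [abs_mul, abs_prod]
    _ ≤ |w e| * 1 := by
      gcongr
      exact prod_le_one (fun i _ => abs_nonneg _) fun i _ => abs_le_one_of_lpNorm_eq_one hp hx i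
    _ = |w e| := mul_one _

lemma polyForm_le_lamMax (hp : 0 < p) {x : V → ℝ} (hx : lpNorm p x = 1) :
    polyForm r E w x ≤ lamMax r p E w :=
  le_csSup ⟨_, by rintro _ ⟨y, hy, rfl⟩; exact polyForm_le_of_lpNorm_eq_one hp hy⟩ ⟨x, hx, rfl⟩

lemma lamMax_le [Nonempty V] (hp : p ≠ 0) {b : ℝ}
    (h : ∀ x : V → ℝ, lpNorm p x = 1 → polyForm r E w x ≤ b) : lamMax r p E w ≤ b := by
  classical
  obtain ⟨v⟩ := ‹Nonempty V›
  exact csSup_le ⟨_, Pi.single v 1, lpNorm_single hp v, rfl⟩ fun _ ⟨x, hx, hs⟩ => hs ▸ h x hx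

lemma lamMax_nonneg [Nonempty V] (hp : 0 < p) (hE : ∀ e ∈ E, 1 < e.card) :
    0 ≤ lamMax r p E w := by
  classical
  obtain ⟨v⟩ := ‹Nonempty V›
  refine le_of_eq_of_le ?_ (polyForm_le_lamMax (w := w) hp (lpNorm_single hp.ne' v))
  refine (mul_eq_zero_of_right _ (sum_eq_zero fun e he => ?_)).symm
  obtain ⟨u, hu, huv⟩ := exists_mem_ne (hE e he) v
  rw [prod_eq_zero hu (Pi.single_eq_of_ne huv 1), mul_zero]

lemma polyForm_le_lpNorm_pow_mul_lamMax (hp : 0 < p) (hr : r ≠ 0)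
    (hE : ∀ e ∈ E, e.card = r) (x : V → ℝ) :
    polyForm r E w x ≤ lpNorm p x ^ r * lamMax r p E w := by
  rcases eq_or_ne x 0 with rfl | hx
  · rw [← smul_zero (0 : ℝ), polyForm_smul hE, lpNorm_smul hp.ne']
    simp [zero_pow hr]
  set n := lpNorm p x
  have hn : 0 < n := lpNorm_pos hx
  have hunit : lpNorm p (n⁻¹ • x) = 1 := by
    rw [lpNorm_smul hp.ne', abs_inv, abs_of_pos hn, inv_mul_cancel₀ hn.ne']
  calc polyForm r E w x = n ^ r * polyForm r E w (n⁻¹ • x) := by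
        rw [polyForm_smul hE, ← mul_assoc, ← mul_pow, mul_inv_cancel₀ hn.ne', one_pow, one_mul]
    _ ≤ n ^ r * lamMax r p E w := by gcongr; exact polyForm_le_lamMax hp hunit

end LamMax

section Transversals

variable {α β : Type*}

lemma graph_injective {S : Finset α} (g : S → β) : Function.Injective fun i : S => (i.1, g i) :=
  fun _ _ h => Subtype.ext (Prod.ext_iff.mp h).1

variable [DecidableEq α] [DecidableEq β] [Fintype β]

def transversals (β : Type*) [DecidableEq β] [Fintype β] (S : Finset α) :
    Finset (Finset (α × β)) :=
  univ.image fun g : S → β => univ.image fun i => (i.1, g i)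

lemma mem_transversals {S : Finset α} {e : Finset (α × β)} :
    e ∈ transversals β S ↔ e.image Prod.fst = S ∧ e.card = S.card := by
  constructor
  · rintro hmem
    obtain ⟨g, -, rfl⟩ := mem_image.mp hmem
    rw [image_image, card_image_of_injective _ (graph_injective g), card_univ, Fintype.card_coe]
    exact ⟨by ext; simp, rfl⟩
  · rintro ⟨himage, hcard⟩
    have hfiber : ∀ i : S, ∃ v ∈ e, v.1 = i := fun i => by
      simpa [← himage] using i.2
    choose v hve hvi using hfiber
    refine mem_image.mpr ⟨fun i => (v i).2, mem_univ _, ?_⟩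
    have hsub : (univ.image fun i : S => (i.1, (v i).2)) ⊆ e := by
      intro u hu
      obtain ⟨i, -, rfl⟩ := mem_image.mp hu
      simpa [← hvi i] using hve i
    refine eq_of_subset_of_card_le hsub ?_
    rw [card_image_of_injective _ (graph_injective _), card_univ, Fintype.card_coe, hcard]

lemma sum_prod_transversals {R : Type*} [CommSemiring R] (S : Finset α) (f : α × β → R) :
    ∑ e ∈ transversals β S, ∏ v ∈ e, f v = ∏ i ∈ S, ∑ j, f (i, j) := by
  have hinj : ∀ g ∈ (univ : Finset (S → β)), ∀ g' ∈ (univ : Finset (S → β)),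
      univ.image (fun i : S => (i.1, g i)) = univ.image (fun i : S => (i.1, g' i)) → g = g' := by
    intro g _ g' _ h
    funext i
    obtain ⟨i', -, hi'⟩ := mem_image.mp (h ▸ mem_image_of_mem (fun i : S => (i.1, g i)) (mem_univ i))
    obtain ⟨hfst, hg⟩ := Prod.mk.inj hi'
    obtain rfl : i' = i := Subtype.ext hfst
    exact hg.symm
  rw [transversals, sum_image hinj, ← prod_coe_sort, Fintype.prod_sum]
  exact sum_congr rfl fun g _ => prod_image fun i _ j _ h => graph_injective g h

end Transversals

lemma card_of_mem_completeEdges {r k : ℕ} {e : Finset (Fin k)} (he : e ∈ completeEdges r k) :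
    e.card = r :=
  (mem_powersetCard.mp he).2

lemma card_of_mem_multiEdges {r k t : ℕ} {e : Finset (Fin k × Fin t)}
    (he : e ∈ multiEdges r k t) : e.card = r :=
  (mem_powersetCard.mp (mem_filter.mp he).1).2

lemma filter_multiEdges_image_fst_eq {r k t : ℕ} {S : Finset (Fin k)}
    (hS : S ∈ completeEdges r k) :
    (multiEdges r k t).filter (fun e => e.image Prod.fst = S) = transversals (Fin t) S := by
  ext e
  simp only [mem_filter, multiEdges, mem_powersetCard_univ, mem_transversals,
    card_of_mem_completeEdges hS]
  constructor
  · rintro ⟨⟨hcard, -⟩, himage⟩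
    exact ⟨himage, hcard⟩
  · rintro ⟨himage, hcard⟩
    exact ⟨⟨hcard, himage ▸ card_of_mem_completeEdges hS⟩, himage⟩

lemma polyForm_multiEdges (r k t : ℕ) (y : Fin k × Fin t → ℝ) :
    polyForm r (multiEdges r k t) (fun _ => 1) y =
      polyForm r (completeEdges r k) (fun _ => 1) (fun i => ∑ j, y (i, j)) := by
  simp only [polyForm, one_mul]
  congr 1
  rw [← sum_fiberwise_of_maps_to (s := multiEdges r k t) (g := fun e => e.image Prod.fst) (t := completeEdges r k)
    fun e he => mem_powersetCard_univ.mpr (mem_filter.mp he).2]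
  exact sum_congr rfl fun S hS => by
    rw [filter_multiEdges_image_fst_eq hS, sum_prod_transversals]

lemma rpow_one_sub_one_div_pow {x : ℝ} (hx : 0 ≤ x) (p : ℝ) (r : ℕ) :
    (x ^ (1 - 1 / p)) ^ r = x ^ ((r : ℝ) - r / p) := by
  rw [← Real.rpow_natCast, ← Real.rpow_mul hx]
  ring_nf

section Multipartite

variable {r k t : ℕ} {p : ℝ}

lemma lamMax_multiEdges_le (hr : 2 ≤ r) (hkr : r ≤ k) (hp : 1 ≤ p) (ht : 0 < t) :
    lamMax r p (multiEdges r k t) (fun _ => 1) ≤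
      (t : ℝ) ^ ((r : ℝ) - r / p) * lamMax r p (completeEdges r k) (fun _ => 1) := by
  have hp0 : 0 < p := by linarith
  have : Nonempty (Fin k) := ⟨⟨0, by omega⟩⟩
  have : Nonempty (Fin t) := ⟨⟨0, ht⟩⟩
  have hK : 0 ≤ lamMax r p (completeEdges r k) (fun _ => 1) :=
    lamMax_nonneg hp0 fun e he => by rw [card_of_mem_completeEdges he]; omega
  refine lamMax_le hp0.ne' fun y hy => ?_
  have hz : lpNorm p (fun i => ∑ j, y (i, j)) ≤ (t : ℝ) ^ (1 - 1 / p) := by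
    simpa [hy] using lpNorm_sum_fiber_le hp y
  calc polyForm r (multiEdges r k t) (fun _ => 1) y
      = polyForm r (completeEdges r k) (fun _ => 1) (fun i => ∑ j, y (i, j)) :=
        polyForm_multiEdges r k t y
    _ ≤ lpNorm p (fun i => ∑ j, y (i, j)) ^ r * lamMax r p (completeEdges r k) (fun _ => 1) :=
        polyForm_le_lpNorm_pow_mul_lamMax hp0 (by omega) (fun _ => card_of_mem_completeEdges) _
    _ ≤ ((t : ℝ) ^ (1 - 1 / p)) ^ r * lamMax r p (completeEdges r k) (fun _ => 1) := by
        gcongr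
        exact lpNorm_nonneg _
    _ = _ := by rw [rpow_one_sub_one_div_pow (Nat.cast_nonneg t)]

lemma le_lamMax_multiEdges (hk : 0 < k) (hp : 0 < p) (ht : 0 < t) :
    (t : ℝ) ^ ((r : ℝ) - r / p) * lamMax r p (completeEdges r k) (fun _ => 1) ≤
      lamMax r p (multiEdges r k t) (fun _ => 1) := by
  have : Nonempty (Fin k) := ⟨⟨0, hk⟩⟩
  have htR : (0 : ℝ) < t := Nat.cast_pos.mpr ht
  have hc : 0 < (t : ℝ) ^ ((r : ℝ) - r / p) := Real.rpow_pos_of_pos htR _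
  rw [← le_div_iff₀' hc]
  refine lamMax_le hp.ne' fun x hx => ?_
  set y : Fin k × Fin t → ℝ := (t : ℝ) ^ (-(1 / p)) • fun v => x v.1
  have hy : lpNorm p y = 1 := by
    rw [lpNorm_smul hp.ne', lpNorm_comp_fst, hx, Fintype.card_fin, abs_of_pos
      (Real.rpow_pos_of_pos htR _), mul_one, ← Real.rpow_add htR, neg_add_cancel, Real.rpow_zero]
  have hsum : (fun i => ∑ j, y (i, j)) = (t : ℝ) ^ (1 - 1 / p) • x := by
    funext i
    simp only [y, Pi.smul_apply, smul_eq_mul, sum_const, card_univ, Fintype.card_fin,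
      nsmul_eq_mul, ← mul_assoc, sub_eq_add_neg, Real.rpow_add htR, Real.rpow_one]
  have hPy : polyForm r (multiEdges r k t) (fun _ => 1) y =
      (t : ℝ) ^ ((r : ℝ) - r / p) * polyForm r (completeEdges r k) (fun _ => 1) x := by
    rw [polyForm_multiEdges, hsum, polyForm_smul (fun _ => card_of_mem_completeEdges),
      rpow_one_sub_one_div_pow htR.le]
  rw [le_div_iff₀' hc, ← hPy]
  exact polyForm_le_lamMax hp hy

end Multipartite

theorem lamMax_multipartite_general (r k t : ℕ) (p : ℝ)
    (hr2 : 2 ≤ r) (hkr : r ≤ k) (hp : (r : ℝ) ≤ p) (ht : 1 ≤ t) :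
    lamMax r p (multiEdges r k t) (fun _ => 1) =
      (t : ℝ) ^ ((r : ℝ) - (r : ℝ) / p) *
        lamMax r p (completeEdges r k) (fun _ => 1) := by
  have hp1 : (1 : ℝ) ≤ p := le_trans (by exact_mod_cast (by omega : 1 ≤ r)) hp
  exact le_antisymm (lamMax_multiEdges_le hr2 hkr hp1 ht)
    (le_lamMax_multiEdges (by omega) (by linarith) ht)

/-- Equation (11) of the paper: for `r ≥ 2` even, `k ≥ r`, `p ≥ r`, and the complete
regular `k`-partite `r`-graph `G` with parts of size `t ≥ 1`:
`λ^(p)(G) = t^{r - r/p} · λ^(p)(K_k^r)`. -/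
theorem lamMax_multipartite (r k t : ℕ) (p : ℝ)
    (hr2 : 2 ≤ r) (hre : Even r) (hkr : r ≤ k) (hp : (r : ℝ) ≤ p) (ht : 1 ≤ t) :
    lamMax r p (multiEdges r k t) (fun _ => 1) =
      (t : ℝ) ^ ((r : ℝ) - (r : ℝ) / p) *
        lamMax r p (completeEdges r k) (fun _ => 1) :=
  lamMax_multipartite_general r k t p hr2 hkr hp ht
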